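/- Under Assumption A there exists a constant c > 0 depending only on a, b, s, C₁, C₂ such that for every 0 < η < 1 the subtree 𝒯_η and its outer leaves Λ_η = Λ(𝒯_η) satisfy #𝒯_η ≤ c · η^{−2/(2s+1)} ln(2/η) and #Λ_η ≤ c · a · η^{−2/(2s+1)} ln(2/η); moreover, for every 0 < σ < s there is a constant c_σ > 0 (depending also on σ) with #𝒯_η ≤ c_σ · η^{−2/(2σ+1)} and #Λ_η ≤ c_σ · η^{−2/(2σ+1)}. -/

import Mathlib

open MeasureTheory Set ProbabilityTheory
open scoped BigOperators ENNReal NNReal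

attribute [local instance] Classical.propDecidable

noncomputable section

/-- Euclidean space `ℝ^D`. -/
abbrev Euc (D : ℕ) : Type := EuclideanSpace ℝ (Fin D)

/-- A partition tree on a subset `X` of `ℝ^D`, with branching number at most `a`.
Cells are abstract nodes; `cset I` is the subset of `ℝ^D` associated with the cell `I`,
`depth I` its depth, `parent I` its parent. -/
structure PartitionTree (D : ℕ) (X : Set (Euc D)) (a : ℕ) : Type 1 where
  Cell : Type
  cellCountable : Countable Cell
  cset : Cell → Set (Euc D)
  depth : Cell → ℕ
  parent : Cell → Cell
  root : Cell
  root_cset : cset root = X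
  depth_root : depth root = 0
  parent_root : parent root = root
  eq_root_of_depth_eq_zero : ∀ I, depth I = 0 → I = root
  depth_parent : ∀ I, I ≠ root → depth (parent I) + 1 = depth I
  level_finite : ∀ j : ℕ, {I | depth I = j}.Finite
  level_cover : ∀ j : ℕ, ⋃ I ∈ {I | depth I = j}, cset I = X
  level_disjoint : ∀ I J, depth I = depth J → I ≠ J → Disjoint (cset I) (cset J)
  cset_measurable : ∀ I, MeasurableSet (cset I)
  cset_eq_iUnion_children : ∀ I, cset I = ⋃ J ∈ {J | parent J = I ∧ J ≠ root}, cset J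
  ncard_children_le : ∀ I, {J | parent J = I ∧ J ≠ root}.ncard ≤ a

namespace PartitionTree

variable {D : ℕ} {X : Set (Euc D)} {a : ℕ} (T : PartitionTree D X a)

/-- The children of a cell. -/
def children (I : T.Cell) : Set T.Cell := {J | T.parent J = I ∧ J ≠ T.root}

/-- `descend k I` is the set `𝒞^k(I)` of `k`-th generation descendants of `I`. -/
def descend : ℕ → T.Cell → Set T.Cell
  | 0, I => {I}
  | k + 1, I => ⋃ J ∈ descend k I, T.children J

/-- A subtree: a family of cells containing the parent of each of its cells. -/
def IsSubtree (S : Set T.Cell) : Prop := ∀ I ∈ S, T.parent I ∈ S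

/-- The outer leaves `Λ(𝒯)` of a subtree `𝒯`. -/
def outerLeaves (S : Set T.Cell) : Set T.Cell := {I | I ∉ S ∧ T.parent I ∈ S}

end PartitionTree

/-- The essential diameter of a set `I` with respect to the measure `ρ`:
`ediam ρ I = inf { diam (I \ J) | J ⊆ I Borel, ρ J = 0 }`. -/
def ediam {D : ℕ} (ρ : Measure (Euc D)) (I : Set (Euc D)) : ℝ :=
  ⨅ J : {J : Set (Euc D) // MeasurableSet J ∧ J ⊆ I ∧ ρ J = 0},
    Metric.diam (I \ (J : Set (Euc D)))

namespace PartitionTree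

variable {D : ℕ} {X : Set (Euc D)} {a : ℕ} (T : PartitionTree D X a)
  (ρ : Measure (Euc D)) (xstar : T.Cell → Euc D)

/-- The (population) center of mass `c_I` of a cell: `ρ(I)⁻¹ ∫_I x dρ(x)` if `ρ(I) > 0`,
and the arbitrary fixed point `xstar I` otherwise. -/
def center (I : T.Cell) : Euc D :=
  if ρ (T.cset I) ≠ 0 then (ρ (T.cset I)).toReal⁻¹ • ∫ x in T.cset I, x ∂ρ else xstar I

/-- The local expected distortion `ℰ_I = ∫_I ‖x - c_I‖² dρ(x)`. -/
def cellErr (I : T.Cell) : ℝ := ∫ x in T.cset I, ‖x - T.center ρ xstar I‖ ^ 2 ∂ρ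

/-- `ε_I² = ℰ_I - ∑_{J ∈ 𝒞(I)} ℰ_J`. -/
def epsSq (I : T.Cell) : ℝ :=
  T.cellErr ρ xstar I - ∑ᶠ J ∈ T.children I, T.cellErr ρ xstar J

/-- `ε_I ≥ 0`, defined by `ε_I² = ℰ_I - ∑_{J ∈ 𝒞(I)} ℰ_J`. -/
def eps (I : T.Cell) : ℝ := Real.sqrt (T.epsSq ρ xstar I)

/-- The subtree `𝒯_η`. -/
def Teta (η : ℝ) : Set T.Cell :=
  if ∀ I, T.eps ρ xstar I < η then {T.root}
  else {I | ∃ k, ∃ J ∈ T.descend k I, η ≤ T.eps ρ xstar J}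

/-- The nonlinear projection `P_Λ(x) = ∑_{I ∈ Λ} c_I 1_I(x)` associated with a family of
cells `Λ` and code vectors `c`. -/
def proj (c : T.Cell → Euc D) (Λ : Set T.Cell) (x : Euc D) : Euc D :=
  ∑ᶠ I ∈ Λ, (T.cset I).indicator (fun _ => c I) x

variable {n : ℕ}

/-- The number `n_I` of sample points lying in the cell `I`. -/
def empCount (x : Fin n → Euc D) (I : T.Cell) : ℕ := {i | x i ∈ T.cset I}.ncard

/-- The empirical center of mass `ĉ_I` of a cell: the average of the sample points lying in
`I` if there are any, and the arbitrary fixed point `xhat I` otherwise. -/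
def empCenter (xhat : T.Cell → Euc D) (x : Fin n → Euc D) (I : T.Cell) : Euc D :=
  if T.empCount x I ≠ 0 then
    ((T.empCount x I : ℝ))⁻¹ • ∑ᶠ i ∈ {i : Fin n | x i ∈ T.cset I}, x i
  else xhat I

/-- The empirical local distortion `Ê_I = n⁻¹ ∑_{i : X_i ∈ I} ‖X_i - ĉ_I‖²`. -/
def empErr (xhat : T.Cell → Euc D) (x : Fin n → Euc D) (I : T.Cell) : ℝ :=
  (n : ℝ)⁻¹ * ∑ᶠ i ∈ {i : Fin n | x i ∈ T.cset I}, ‖x i - T.empCenter xhat x I‖ ^ 2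

/-- `ε̂_I² = Ê_I - ∑_{J ∈ 𝒞(I)} Ê_J`. -/
def empEpsSq (xhat : T.Cell → Euc D) (x : Fin n → Euc D) (I : T.Cell) : ℝ :=
  T.empErr xhat x I - ∑ᶠ J ∈ T.children I, T.empErr xhat x J

/-- `ε̂_I ≥ 0`, defined by `ε̂_I² = Ê_I - ∑_{J ∈ 𝒞(I)} Ê_J`. -/
def empEps (xhat : T.Cell → Euc D) (x : Fin n → Euc D) (I : T.Cell) : ℝ :=
  Real.sqrt (T.empEpsSq xhat x I)

/-- The empirical subtree `T̂_η`, truncated at depth `jn`. -/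
def empTeta (xhat : T.Cell → Euc D) (x : Fin n → Euc D) (jn : ℕ) (η : ℝ) : Set T.Cell :=
  if ∀ I, T.depth I ≤ jn → T.empEps xhat x I < η then {T.root}
  else {I | ∃ k, ∃ J ∈ T.descend k I, T.depth J ≤ jn ∧ η ≤ T.empEps xhat x J}

end PartitionTree

/-- Assumption A: `ediam(I) ≤ C₁ ρ(I)^s` and `ediam(I) ≤ C₂ b^{-j_I}` for every cell `I`. -/
def AssumptionA {D : ℕ} {X : Set (Euc D)} {a : ℕ} (T : PartitionTree D X a)
    (ρ : Measure (Euc D)) (b s C₁ C₂ : ℝ) : Prop :=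
  ∀ I : T.Cell,
    ediam ρ (T.cset I) ≤ C₁ * (ρ (T.cset I)).toReal ^ s ∧
    ediam ρ (T.cset I) ≤ C₂ * b ^ (-(T.depth I : ℝ))

/-!
If `ε_J ≥ η`, then `η² ≤ ε_J² ≤ ℰ_J ≤ ediam(J)² ρ(J)`, because the center of mass of `J` lies in the
closed convex hull of `J` with any null set removed. Assumption A then forces
`ρ(J) ≥ (η / C₁)^{2/(2s+1)}` and `b^{j_J} ≤ C₂ / η`, and both bounds pass to the ancestors of `J`,
that is, to every cell of `𝒯_η` except possibly the root. Cells of one level are disjoint, so each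
of the `O(log (2/η))` admissible levels contains at most `(C₁ / η)^{2/(2s+1)}` cells of `𝒯_η`, and
every outer leaf is one of the at most `a` children of a cell of `𝒯_η`. The `σ`-bounds follow from
`log x ≤ x^δ / δ` with `δ = 2/(2σ+1) - 2/(2s+1)`.
-/

lemma rpow_le_of_sq_le_sq_mul {η C s t : ℝ} (hη : 0 < η) (hC : 0 < C) (hs : 0 < s) (ht : 0 ≤ t)
    (h : η ^ 2 ≤ (C * t ^ s) ^ 2 * t) : (η / C) ^ (2 / (2 * s + 1)) ≤ t := by
  have hrhs : (C * t ^ s) ^ 2 * t = C ^ 2 * t ^ (2 * s + 1) := by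
    rw [Real.rpow_add_one' ht (by positivity), mul_comm 2 s, Real.rpow_mul ht, Real.rpow_two]
    ring
  have hsq : (η / C) ^ (2 : ℝ) ≤ t ^ (2 * s + 1) := by
    rw [Real.rpow_two, div_pow, div_le_iff₀ (by positivity)]
    linarith
  calc (η / C) ^ (2 / (2 * s + 1)) = ((η / C) ^ (2 : ℝ)) ^ (2 * s + 1)⁻¹ := by
        rw [← Real.rpow_mul (by positivity), ← div_eq_mul_inv]
    _ ≤ (t ^ (2 * s + 1)) ^ (2 * s + 1)⁻¹ := by gcongr
    _ = t := Real.rpow_rpow_inv ht (by positivity)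

lemma rpow_neg_mul_log_le {η κ δ : ℝ} (hη : 0 < η) (hδ : 0 < δ) :
    η ^ (-κ) * Real.log (2 / η) ≤ 2 ^ δ / δ * η ^ (-(κ + δ)) := by
  calc η ^ (-κ) * Real.log (2 / η) ≤ η ^ (-κ) * ((2 / η) ^ δ / δ) := by
        gcongr
        exact Real.log_le_rpow_div (by positivity) hδ
    _ = 2 ^ δ / δ * η ^ (-(κ + δ)) := by
        rw [Real.div_rpow zero_le_two hη.le, neg_add, Real.rpow_add hη, Real.rpow_neg hη.le δ]
        ring

lemma natFloor_logb_div_add_one_le {b C η : ℝ} (hb : 1 < b) (hC : 0 < C) (hη : 0 < η)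
    (hη1 : η < 1) :
    (⌊Real.logb b (C / η)⌋₊ : ℝ) + 1 ≤
      ((|Real.log C| / Real.log 2 + 1) / Real.log b + 1 / Real.log 2) * Real.log (2 / η) := by
  have hlog2 : 0 < Real.log 2 := Real.log_pos one_lt_two
  have hlogb : 0 < Real.log b := Real.log_pos hb
  set ℓ := Real.log (2 / η) with hℓ_def
  have hℓ : Real.log 2 ≤ ℓ := Real.log_le_log two_pos ((le_div_iff₀ hη).2 (by linarith))
  have hfloor : (⌊Real.logb b (C / η)⌋₊ : ℝ) ≤ (|Real.log C| + ℓ) / Real.log b := by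
    refine (Nat.cast_le.2 (Nat.floor_le_floor ?_)).trans (Nat.floor_le ?_)
    · rw [Real.logb, Real.log_div hC.ne' hη.ne', hℓ_def, Real.log_div two_ne_zero hη.ne']
      gcongr
      linarith [le_abs_self (Real.log C)]
    · exact div_nonneg (by linarith [abs_nonneg (Real.log C)]) hlogb.le
  have hC_le : |Real.log C| + ℓ ≤ (|Real.log C| / Real.log 2 + 1) * ℓ := by
    rw [add_mul, one_mul, div_mul_eq_mul_div]
    gcongr
    rw [le_div_iff₀ hlog2]
    gcongr
  have hone : 1 ≤ 1 / Real.log 2 * ℓ := by rwa [one_div_mul_eq_div, le_div_iff₀ hlog2, one_mul]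
  calc _ ≤ (|Real.log C| + ℓ) / Real.log b + 1 := by gcongr
    _ ≤ (|Real.log C| / Real.log 2 + 1) * ℓ / Real.log b + 1 / Real.log 2 * ℓ := by gcongr
    _ = _ := by ring

lemma exists_bound_le_mul_rpow_neg_mul_log {b C₁ C₂ κ : ℝ} (hb : 1 < b) (hC₁ : 0 < C₁)
    (hC₂ : 0 < C₂) (hκ : 0 ≤ κ) :
    ∃ c > 0, ∀ η : ℝ, 0 < η → η < 1 →
      1 + (⌊Real.logb b (C₂ / η)⌋₊ + 1) / (η / C₁) ^ κ ≤
        c * η ^ (-κ) * Real.log (2 / η) := by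
  set L := (|Real.log C₂| / Real.log 2 + 1) / Real.log b + 1 / Real.log 2
  have hlog2 : 0 < Real.log 2 := Real.log_pos one_lt_two
  have hL : 0 < L := add_pos (div_pos (by positivity) (Real.log_pos hb)) (by positivity)
  refine ⟨1 / Real.log 2 + L * C₁ ^ κ, by positivity, fun η hη hη1 => ?_⟩
  set ℓ := Real.log (2 / η)
  set E := η ^ (-κ)
  have hℓ : Real.log 2 ≤ ℓ := Real.log_le_log two_pos ((le_div_iff₀ hη).2 (by linarith))
  have hE : 1 ≤ E := Real.one_le_rpow_of_pos_of_le_one_of_nonpos hη hη1.le (neg_nonpos.2 hκ)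
  have hinv : 1 / (η / C₁) ^ κ = C₁ ^ κ * E := by
    rw [Real.div_rpow hη.le hC₁.le, show E = (η ^ κ)⁻¹ from Real.rpow_neg hη.le κ]
    field_simp
  have hone : 1 ≤ 1 / Real.log 2 * E * ℓ := by
    rw [one_div_mul_eq_div, div_mul_eq_mul_div, le_div_iff₀ hlog2, one_mul]
    nlinarith
  calc 1 + (⌊Real.logb b (C₂ / η)⌋₊ + 1) / (η / C₁) ^ κ
      = 1 + (⌊Real.logb b (C₂ / η)⌋₊ + 1) * (C₁ ^ κ * E) := by rw [← hinv, mul_one_div]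
    _ ≤ 1 / Real.log 2 * E * ℓ + L * ℓ * (C₁ ^ κ * E) := by
        gcongr
        exact natFloor_logb_div_add_one_le hb hC₂ hη hη1
    _ = (1 / Real.log 2 + L * C₁ ^ κ) * E * ℓ := by ring

namespace PartitionTree

variable {D : ℕ} {X : Set (Euc D)} {a : ℕ} (T : PartitionTree D X a)

lemma cset_subset (I : T.Cell) : T.cset I ⊆ X :=
  (subset_biUnion_of_mem (show I ∈ {J | T.depth J = T.depth I} from rfl)).trans
    (T.level_cover (T.depth I)).subset

lemma depth_of_mem_children {I J : T.Cell} (hJ : J ∈ T.children I) :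
    T.depth J = T.depth I + 1 := by
  rw [← T.depth_parent J hJ.2, hJ.1]

lemma children_finite (I : T.Cell) : (T.children I).Finite :=
  (T.level_finite (T.depth I + 1)).subset fun _ hJ => T.depth_of_mem_children hJ

lemma cset_subset_of_mem_children {I J : T.Cell} (hJ : J ∈ T.children I) :
    T.cset J ⊆ T.cset I := by
  rw [T.cset_eq_iUnion_children I]
  exact subset_biUnion_of_mem hJ

lemma cset_subset_of_mem_descend {k : ℕ} {I J : T.Cell} (hJ : J ∈ T.descend k I) :
    T.cset J ⊆ T.cset I := by
  induction k generalizing J with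
  | zero => rw [show J = I from hJ]
  | succ k ih =>
    obtain ⟨J', hJ', hJ⟩ := mem_iUnion₂.1 hJ
    exact (T.cset_subset_of_mem_children hJ).trans (ih hJ')

lemma depth_of_mem_descend {k : ℕ} {I J : T.Cell} (hJ : J ∈ T.descend k I) :
    T.depth J = T.depth I + k := by
  induction k generalizing J with
  | zero => rw [show J = I from hJ, add_zero]
  | succ k ih =>
    obtain ⟨J', hJ', hJ⟩ := mem_iUnion₂.1 hJ
    rw [T.depth_of_mem_children hJ, ih hJ', add_assoc]

lemma finite_setOf_depth_le (N : ℕ) : {I | T.depth I ≤ N}.Finite :=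
  ((finite_Iic N).biUnion fun j _ => T.level_finite j).subset
    fun _ hI => mem_biUnion (mem_Iic.2 hI) rfl

lemma outerLeaves_subset_biUnion_children (S : Set T.Cell) :
    T.outerLeaves S ⊆ ⋃ I ∈ S, T.children I := by
  rintro J ⟨hJ, hPJ⟩
  have hJroot : J ≠ T.root := by
    rintro rfl
    exact hJ (T.parent_root ▸ hPJ)
  exact mem_biUnion hPJ ⟨rfl, hJroot⟩

lemma ncard_outerLeaves_le {S : Set T.Cell} (hS : S.Finite) :
    (T.outerLeaves S).ncard ≤ a * S.ncard := by
  have hsub : T.outerLeaves S ⊆ ⋃ I ∈ hS.toFinset, T.children I := by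
    simpa using T.outerLeaves_subset_biUnion_children S
  calc (T.outerLeaves S).ncard
      ≤ (⋃ I ∈ hS.toFinset, T.children I).ncard :=
        ncard_le_ncard hsub (hS.toFinset.finite_toSet.biUnion fun I _ => T.children_finite I)
    _ ≤ ∑ I ∈ hS.toFinset, (T.children I).ncard := Finset.set_ncard_biUnion_le _ _
    _ ≤ ∑ _I ∈ hS.toFinset, a := Finset.sum_le_sum fun I _ => T.ncard_children_le I
    _ = a * S.ncard := by rw [Finset.sum_const, smul_eq_mul, ncard_eq_toFinset_card S hS, mul_comm]

section

variable (ρ : Measure (Euc D)) [IsProbabilityMeasure ρ]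

lemma sum_measureReal_le_one_of_depth_eq {F : Finset T.Cell} {j : ℕ}
    (hF : ∀ I ∈ F, T.depth I = j) : ∑ I ∈ F, ρ.real (T.cset I) ≤ 1 := by
  have hdisj : (F : Set T.Cell).PairwiseDisjoint T.cset := fun I hI J hJ hIJ =>
    T.level_disjoint I J ((hF I hI).trans (hF J hJ).symm) hIJ
  rw [← measureReal_biUnion_finset hdisj fun I _ => T.cset_measurable I]
  exact measureReal_le_one

lemma sum_measureReal_le_of_depth_le {F : Finset T.Cell} {N : ℕ}
    (hF : ∀ I ∈ F, T.depth I ≤ N) : ∑ I ∈ F, ρ.real (T.cset I) ≤ N + 1 := by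
  rw [← Finset.sum_fiberwise_of_maps_to (t := Finset.range (N + 1)) (g := T.depth)
    fun I hI => Finset.mem_range.2 (Nat.lt_succ_of_le (hF I hI))]
  calc _ ≤ ∑ _j ∈ Finset.range (N + 1), (1 : ℝ) := Finset.sum_le_sum fun j _ =>
        T.sum_measureReal_le_one_of_depth_eq ρ fun I hI => (Finset.mem_filter.1 hI).2
    _ = N + 1 := by simp

lemma finite_and_ncard_mul_le {S : Set T.Cell} {N : ℕ} {m : ℝ}
    (hS : ∀ I ∈ S, T.depth I ≤ N ∧ m ≤ ρ.real (T.cset I)) :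
    S.Finite ∧ S.ncard * m ≤ N + 1 := by
  have hfin : S.Finite := (T.finite_setOf_depth_le N).subset fun I hI => (hS I hI).1
  refine ⟨hfin, ?_⟩
  rw [ncard_eq_toFinset_card S hfin, ← nsmul_eq_mul]
  exact (Finset.card_nsmul_le_sum _ _ _ fun I hI => (hS I (by simpa using hI)).2).trans
    (T.sum_measureReal_le_of_depth_le ρ fun I hI => (hS I (by simpa using hI)).1)

end

variable (ρ : Measure (Euc D)) (xstar : T.Cell → Euc D) {b s C₁ C₂ η : ℝ}

lemma cellErr_nonneg (I : T.Cell) : 0 ≤ T.cellErr ρ xstar I :=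
  integral_nonneg fun _ => by positivity

lemma sq_le_cellErr_of_le_eps {η : ℝ} (hη : 0 < η) {I : T.Cell} (h : η ≤ T.eps ρ xstar I) :
    η ^ 2 ≤ T.cellErr ρ xstar I := by
  have hsum : 0 ≤ ∑ᶠ J ∈ T.children I, T.cellErr ρ xstar J :=
    finsum_nonneg fun J => finsum_nonneg fun _ => T.cellErr_nonneg ρ xstar J
  have := (Real.le_sqrt' hη).1 h
  rw [epsSq] at this
  linarith

section

variable [IsFiniteMeasure ρ]

lemma center_mem_closure_convexHull (hX : Bornology.IsBounded X) {I : T.Cell}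
    (hI : ρ (T.cset I) ≠ 0) {K : Set (Euc D)} (hK : ρ K = 0) :
    T.center ρ xstar I ∈ closure (convexHull ℝ (T.cset I \ K)) := by
  obtain ⟨C, hC⟩ := hX.exists_norm_le
  have hmem : ∀ᵐ x ∂ρ.restrict (T.cset I), x ∈ T.cset I \ K := by
    filter_upwards [ae_restrict_mem (T.cset_measurable I),
      ae_restrict_of_ae (measure_eq_zero_iff_ae_notMem.1 hK)] with x hxI hxK
    exact ⟨hxI, hxK⟩
  have hint : IntegrableOn (fun x => x) (T.cset I) ρ :=
    IntegrableOn.of_bound (measure_lt_top ρ _) aestronglyMeasurable_id C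
      (hmem.mono fun x hx => hC x (T.cset_subset I hx.1))
  rw [center, if_pos hI, ← measureReal_def, ← setAverage_eq]
  exact (convex_convexHull ℝ _).set_average_mem_closure hI (measure_ne_top ρ _)
    (hmem.mono fun x hx => subset_convexHull ℝ _ hx) hint

lemma cellErr_le_diam_sq_mul (hX : Bornology.IsBounded X) (I : T.Cell) {K : Set (Euc D)}
    (hK : ρ K = 0) :
    T.cellErr ρ xstar I ≤ Metric.diam (T.cset I \ K) ^ 2 * ρ.real (T.cset I) := by
  by_cases hI : ρ (T.cset I) = 0
  · rw [cellErr, Measure.restrict_eq_zero.2 hI, integral_zero_measure]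
    positivity
  have hS : Bornology.IsBounded (closure (convexHull ℝ (T.cset I \ K))) :=
    (isBounded_convexHull.2 (hX.subset (sdiff_subset.trans (T.cset_subset I)))).closure
  have hdist : ∀ᵐ x ∂ρ.restrict (T.cset I),
      ‖‖x - T.center ρ xstar I‖ ^ 2‖ ≤ Metric.diam (T.cset I \ K) ^ 2 := by
    filter_upwards [ae_restrict_mem (T.cset_measurable I),
      ae_restrict_of_ae (measure_eq_zero_iff_ae_notMem.1 hK)] with x hxI hxK
    have hx : dist x (T.center ρ xstar I) ≤ Metric.diam (T.cset I \ K) := by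
      rw [← convexHull_diam, ← Metric.diam_closure]
      exact Metric.dist_le_diam_of_mem hS (subset_closure (subset_convexHull ℝ _ ⟨hxI, hxK⟩))
        (T.center_mem_closure_convexHull ρ xstar hX hI hK)
    rw [norm_pow, norm_norm, ← dist_eq_norm]
    exact pow_le_pow_left₀ dist_nonneg hx 2
  exact (Real.le_norm_self _).trans
    (norm_setIntegral_le_of_norm_le_const_ae (measure_lt_top ρ _) hdist)

lemma cellErr_le_ediam_sq_mul (hX : Bornology.IsBounded X) (I : T.Cell) :
    T.cellErr ρ xstar I ≤ ediam ρ (T.cset I) ^ 2 * ρ.real (T.cset I) := by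
  have hK := fun K : {K : Set (Euc D) // MeasurableSet K ∧ K ⊆ T.cset I ∧ ρ K = 0} =>
    T.cellErr_le_diam_sq_mul ρ xstar hX I K.2.2.2
  rcases (measureReal_nonneg (μ := ρ) (s := T.cset I)).eq_or_lt with hI | hI
  · simpa [← hI] using hK ⟨∅, MeasurableSet.empty, empty_subset _, measure_empty⟩
  have : Nonempty {K : Set (Euc D) // MeasurableSet K ∧ K ⊆ T.cset I ∧ ρ K = 0} :=
    ⟨⟨∅, MeasurableSet.empty, empty_subset _, measure_empty⟩⟩
  have hsqrt : √(T.cellErr ρ xstar I / ρ.real (T.cset I)) ≤ ediam ρ (T.cset I) :=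
    le_ciInf fun K => (Real.sqrt_le_left Metric.diam_nonneg).2 ((div_le_iff₀ hI).2 (hK K))
  rw [← div_le_iff₀ hI]
  exact (Real.sqrt_le_left (Real.iInf_nonneg fun _ => Metric.diam_nonneg)).1 hsqrt

end

lemma rpow_le_measureReal_of_le_eps [IsFiniteMeasure ρ] (hX : Bornology.IsBounded X)
    (hA : AssumptionA T ρ b s C₁ C₂) (hs : 0 < s) (hC₁ : 0 < C₁) (hη : 0 < η) {J : T.Cell}
    (h : η ≤ T.eps ρ xstar J) : (η / C₁) ^ (2 / (2 * s + 1)) ≤ ρ.real (T.cset J) := by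
  have hdiam : ediam ρ (T.cset J) ^ 2 ≤ (C₁ * ρ.real (T.cset J) ^ s) ^ 2 :=
    pow_le_pow_left₀ (Real.iInf_nonneg fun _ => Metric.diam_nonneg) (hA J).1 2
  refine rpow_le_of_sq_le_sq_mul hη hC₁ hs measureReal_nonneg ?_
  calc η ^ 2 ≤ T.cellErr ρ xstar J := T.sq_le_cellErr_of_le_eps ρ xstar hη h
    _ ≤ ediam ρ (T.cset J) ^ 2 * ρ.real (T.cset J) := T.cellErr_le_ediam_sq_mul ρ xstar hX J
    _ ≤ _ := by gcongr

lemma depth_le_of_le_eps [IsProbabilityMeasure ρ] (hX : Bornology.IsBounded X)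
    (hA : AssumptionA T ρ b s C₁ C₂) (hb : 1 < b) (hη : 0 < η) {J : T.Cell}
    (h : η ≤ T.eps ρ xstar J) : T.depth J ≤ ⌊Real.logb b (C₂ / η)⌋₊ := by
  have hediam : η ≤ ediam ρ (T.cset J) := by
    refine (pow_le_pow_iff_left₀ hη.le (Real.iInf_nonneg fun _ => Metric.diam_nonneg)
      two_ne_zero).1 ?_
    calc η ^ 2 ≤ T.cellErr ρ xstar J := T.sq_le_cellErr_of_le_eps ρ xstar hη h
      _ ≤ ediam ρ (T.cset J) ^ 2 * ρ.real (T.cset J) := T.cellErr_le_ediam_sq_mul ρ xstar hX J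
      _ ≤ ediam ρ (T.cset J) ^ 2 := mul_le_of_le_one_right (by positivity) measureReal_le_one
  have hbJ : b ^ (T.depth J : ℝ) * η ≤ C₂ := by
    have := hediam.trans (hA J).2
    rwa [Real.rpow_neg (by positivity), ← div_eq_mul_inv, le_div_iff₀ (by positivity),
      mul_comm] at this
  refine Nat.le_floor ((Real.le_logb_iff_rpow_le hb ?_).2 ((le_div_iff₀ hη).2 hbJ))
  exact div_pos ((mul_pos (by positivity) hη).trans_le hbJ) hη

lemma Teta_subset_insert_root :
    T.Teta ρ xstar η ⊆ insert T.root {I | ∃ k, ∃ J ∈ T.descend k I, η ≤ T.eps ρ xstar J} := by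
  unfold Teta
  split_ifs
  · exact singleton_subset_iff.2 (mem_insert _ _)
  · exact subset_insert _ _

theorem finite_Teta_and_ncard_le [IsProbabilityMeasure ρ] (hX : Bornology.IsBounded X)
    (hA : AssumptionA T ρ b s C₁ C₂) (hb : 1 < b) (hs : 0 < s) (hC₁ : 0 < C₁) (hη : 0 < η) :
    (T.Teta ρ xstar η).Finite ∧
      ((T.Teta ρ xstar η).ncard : ℝ) ≤
        1 + (⌊Real.logb b (C₂ / η)⌋₊ + 1) / (η / C₁) ^ (2 / (2 * s + 1)) := by
  set S := {I | ∃ k, ∃ J ∈ T.descend k I, η ≤ T.eps ρ xstar J}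
  obtain ⟨hSfin, hS⟩ := T.finite_and_ncard_mul_le ρ (S := S) (N := ⌊Real.logb b (C₂ / η)⌋₊)
    (m := (η / C₁) ^ (2 / (2 * s + 1))) <| by
    rintro I ⟨k, J, hJ, hηJ⟩
    refine ⟨?_, ?_⟩
    · have := T.depth_of_mem_descend hJ
      have := T.depth_le_of_le_eps ρ xstar hX hA hb hη hηJ
      omega
    · exact (T.rpow_le_measureReal_of_le_eps ρ xstar hX hA hs hC₁ hη hηJ).trans
        (measureReal_mono (T.cset_subset_of_mem_descend hJ))
  have hsub := T.Teta_subset_insert_root ρ xstar (η := η)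
  refine ⟨(hSfin.insert _).subset hsub, ?_⟩
  have hcard : ((T.Teta ρ xstar η).ncard : ℝ) ≤ S.ncard + 1 := by
    exact_mod_cast (ncard_le_ncard hsub (hSfin.insert _)).trans (ncard_insert_le _ _)
  have : (S.ncard : ℝ) ≤ (⌊Real.logb b (C₂ / η)⌋₊ + 1) / (η / C₁) ^ (2 / (2 * s + 1)) :=
    (le_div_iff₀ (by positivity)).2 hS
  linarith

end PartitionTree

theorem stmt_7_general (a : ℕ) (b s C₁ C₂ : ℝ) (hb : 1 < b) (hs : 0 < s)
    (hC₁ : 0 < C₁) (hC₂ : 0 < C₂) :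
    ∃ c : ℝ, 0 < c ∧ ∀ σ : ℝ, 0 < σ → σ < s → ∃ cσ : ℝ, 0 < cσ ∧
      ∀ (D : ℕ) (X : Set (Euc D)) (T : PartitionTree D X a)
        (ρ : Measure (Euc D)) (xstar : T.Cell → Euc D),
        IsProbabilityMeasure ρ → ρ Xᶜ = 0 → (0 : Euc D) ∈ X →
        Bornology.IsBounded X → Metric.diam X ≤ 1 → (∀ I, xstar I ∈ X) →
        AssumptionA T ρ b s C₁ C₂ →
        ∀ η : ℝ, 0 < η → η < 1 →
          (T.Teta ρ xstar η).Finite ∧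
          ((T.Teta ρ xstar η).ncard : ℝ) ≤
            c * η ^ (-(2 : ℝ) / (2 * s + 1)) * Real.log (2 / η) ∧
          ((T.outerLeaves (T.Teta ρ xstar η)).ncard : ℝ) ≤
            c * a * η ^ (-(2 : ℝ) / (2 * s + 1)) * Real.log (2 / η) ∧
          ((T.Teta ρ xstar η).ncard : ℝ) ≤ cσ * η ^ (-(2 : ℝ) / (2 * σ + 1)) ∧
          ((T.outerLeaves (T.Teta ρ xstar η)).ncard : ℝ) ≤
            cσ * η ^ (-(2 : ℝ) / (2 * σ + 1)) := by
  obtain ⟨c, hc, hbound⟩ := exists_bound_le_mul_rpow_neg_mul_log hb hC₁ hC₂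
    (κ := 2 / (2 * s + 1)) (by positivity)
  refine ⟨c, hc, fun σ hσ hσs => ?_⟩
  set δ := 2 / (2 * σ + 1) - 2 / (2 * s + 1)
  have hδ : 0 < δ := sub_pos.2 (div_lt_div_of_pos_left two_pos (by positivity) (by linarith))
  refine ⟨(a + 1) * (c * (2 ^ δ / δ)), by positivity, ?_⟩
  intro D X T ρ xstar _ _ _ hX _ _ hA η hη hη1
  obtain ⟨hfin, hcard⟩ := T.finite_Teta_and_ncard_le ρ xstar hX hA hb hs hC₁ hη
  set E := η ^ (-(2 : ℝ) / (2 * s + 1)) * Real.log (2 / η)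
  set Eσ := 2 ^ δ / δ * η ^ (-(2 : ℝ) / (2 * σ + 1))
  have hTeta : ((T.Teta ρ xstar η).ncard : ℝ) ≤ c * E := by
    rw [← mul_assoc, neg_div]
    exact hcard.trans (hbound η hη hη1)
  have hleaves : ((T.outerLeaves (T.Teta ρ xstar η)).ncard : ℝ) ≤ a * (c * E) := by
    calc _ ≤ ((a * (T.Teta ρ xstar η).ncard : ℕ) : ℝ) := Nat.cast_le.2 (T.ncard_outerLeaves_le hfin)
      _ ≤ a * (c * E) := by push_cast; gcongr
  have hEσ : c * E ≤ c * Eσ := by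
    have := rpow_neg_mul_log_le (κ := 2 / (2 * s + 1)) hη hδ
    rw [add_sub_cancel, ← neg_div, ← neg_div] at this
    exact mul_le_mul_of_nonneg_left this hc.le
  have ha_le : (a : ℝ) ≤ a + 1 := le_add_of_nonneg_right zero_le_one
  have hcEσ : 0 ≤ c * Eσ := by positivity
  refine ⟨hfin, hTeta.trans_eq (mul_assoc _ _ _).symm, hleaves.trans_eq (by ring), ?_, ?_⟩
  · calc _ ≤ c * Eσ := hTeta.trans hEσ
      _ ≤ (a + 1) * (c * Eσ) := le_mul_of_one_le_left hcEσ (le_add_of_nonneg_left a.cast_nonneg)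
      _ = _ := by ring
  · calc _ ≤ a * (c * Eσ) := hleaves.trans (by gcongr)
      _ ≤ (a + 1) * (c * Eσ) := by gcongr
      _ = _ := by ring

theorem stmt_7 (a : ℕ) (b s C₁ C₂ : ℝ) (ha : 1 ≤ a) (hb : 1 < b) (hs : 0 < s)
    (hC₁ : 0 < C₁) (hC₂ : 0 < C₂) :
    ∃ c : ℝ, 0 < c ∧ ∀ σ : ℝ, 0 < σ → σ < s → ∃ cσ : ℝ, 0 < cσ ∧
      ∀ (D : ℕ) (X : Set (Euc D)) (T : PartitionTree D X a)
        (ρ : Measure (Euc D)) (xstar : T.Cell → Euc D),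
        IsProbabilityMeasure ρ → ρ Xᶜ = 0 → (0 : Euc D) ∈ X →
        Bornology.IsBounded X → Metric.diam X ≤ 1 → (∀ I, xstar I ∈ X) →
        AssumptionA T ρ b s C₁ C₂ →
        ∀ η : ℝ, 0 < η → η < 1 →
          (T.Teta ρ xstar η).Finite ∧
          ((T.Teta ρ xstar η).ncard : ℝ) ≤
            c * η ^ (-(2 : ℝ) / (2 * s + 1)) * Real.log (2 / η) ∧
          ((T.outerLeaves (T.Teta ρ xstar η)).ncard : ℝ) ≤
            c * a * η ^ (-(2 : ℝ) / (2 * s + 1)) * Real.log (2 / η) ∧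
          ((T.Teta ρ xstar η).ncard : ℝ) ≤ cσ * η ^ (-(2 : ℝ) / (2 * σ + 1)) ∧
          ((T.outerLeaves (T.Teta ρ xstar η)).ncard : ℝ) ≤
            cσ * η ^ (-(2 : ℝ) / (2 * σ + 1)) :=
  stmt_7_general a b s C₁ C₂ hb hs hC₁ hC₂

end
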